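/- arXiv:1603.07220 — 4 statements merged into one kernel-verified Lean document; each statement's English description precedes it below -/
import Mathlib

section
/- The radius of convergence of the power series Σ_{p≥0} C_p^{(D+1)} z^p, where C_p^{(D+1)} are the Fuss–Catalan numbers, equals z_c = D^D / (D+1)^{D+1}. -/
/-- Fuss–Catalan numbers `C_p = (1/((D+1)p+1)) * choose((D+1)p+1, p)` as reals. -/
noncomputable def fussCatalan (D p : ℕ) : ℝ :=
  (1 / (((D + 1) * p + 1 : ℕ) : ℝ)) * (Nat.choose ((D + 1) * p + 1) p : ℝ)

/-!
The factorial formula `C_p = ((D+1)p)! / (p! (Dp+1)!)` makes `C_{p+1} / C_p` a quotient of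
rising factorials, `((D+1)p+1)^{(D+1)} / ((p+1) (Dp+2)^{(D)})`: a ratio of two polynomials of
degree `D+1` in `p`, tending to `(D+1)^{D+1} / D^D`. By the ratio test `Σ C_p r^p` converges
for `0 ≤ r` below the reciprocal of this limit and diverges above it.
-/

open Filter Topology Finset Nat

section RatioTest

variable {a : ℕ → ℝ} {L : ℝ}

lemma tendsto_norm_mul_pow_ratio (h : Tendsto (fun p => ‖a (p + 1)‖ / ‖a p‖) atTop (𝓝 L))
    {r : ℝ} (hr : r ≠ 0) :
    Tendsto (fun p => ‖a (p + 1) * r ^ (p + 1)‖ / ‖a p * r ^ p‖) atTop (𝓝 (L * ‖r‖)) := by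
  refine (h.mul_const ‖r‖).congr fun p => ?_
  have hrp : ‖r‖ ^ p ≠ 0 := pow_ne_zero p (norm_ne_zero_iff.mpr hr)
  rw [norm_mul, norm_mul, norm_pow, norm_pow, pow_succ, mul_div_mul_comm,
    mul_div_cancel_left₀ _ hrp]

lemma summable_mul_pow_of_tendsto_ratio (ha : ∀ᶠ p in atTop, a p ≠ 0)
    (h : Tendsto (fun p => ‖a (p + 1)‖ / ‖a p‖) atTop (𝓝 L)) {r : ℝ} (hr : r ≠ 0)
    (hLr : L * ‖r‖ < 1) : Summable (fun p => a p * r ^ p) :=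
  summable_of_ratio_test_tendsto_lt_one hLr
    (ha.mono fun p hp => mul_ne_zero hp (pow_ne_zero p hr)) (tendsto_norm_mul_pow_ratio h hr)

lemma not_summable_mul_pow_of_tendsto_ratio
    (h : Tendsto (fun p => ‖a (p + 1)‖ / ‖a p‖) atTop (𝓝 L)) {r : ℝ} (hLr : 1 < L * ‖r‖) :
    ¬ Summable (fun p => a p * r ^ p) := by
  have hr : r ≠ 0 := by rintro rfl; norm_num at hLr
  exact not_summable_of_ratio_test_tendsto_gt_one hLr (tendsto_norm_mul_pow_ratio h hr)

theorem sSup_summable_mul_pow_eq_inv_of_tendsto_ratio (ha : ∀ᶠ p in atTop, a p ≠ 0)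
    (hL : 0 < L) (h : Tendsto (fun p => ‖a (p + 1)‖ / ‖a p‖) atTop (𝓝 L)) :
    sSup {r : ℝ | 0 ≤ r ∧ Summable (fun p => a p * r ^ p)} = L⁻¹ := by
  have mem_of_lt {r : ℝ} (hr0 : 0 < r) (hr : r < L⁻¹) :
      0 ≤ r ∧ Summable (fun p => a p * r ^ p) := by
    refine ⟨hr0.le, summable_mul_pow_of_tendsto_ratio ha h hr0.ne' ?_⟩
    rwa [Real.norm_of_nonneg hr0.le, ← lt_div_iff₀' hL, one_div]
  have hLinv : 0 < L⁻¹ := inv_pos.mpr hL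
  refine csSup_eq_of_forall_le_of_forall_lt_exists_gt
    ⟨L⁻¹ / 2, mem_of_lt (by positivity) (by linarith)⟩ (fun r ⟨hr0, hr⟩ => ?_) fun w hw => ?_
  · by_contra! hlt
    refine not_summable_mul_pow_of_tendsto_ratio h ?_ hr
    rwa [Real.norm_of_nonneg hr0, ← div_lt_iff₀' hL, one_div]
  · refine ⟨(max w 0 + L⁻¹) / 2, mem_of_lt ?_ ?_, ?_⟩ <;>
      linarith [le_max_left w 0, le_max_right w 0, max_lt hw hLinv]

end RatioTest

lemma tendsto_ascFactorial_div_pow (a b k : ℕ) :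
    Tendsto (fun p : ℕ => ((a * p + b).ascFactorial k : ℝ) / (p : ℝ) ^ k) atTop
      (𝓝 ((a : ℝ) ^ k)) := by
  have linear (c : ℝ) : Tendsto (fun p : ℕ => ((a : ℝ) * p + c) / p) atTop (𝓝 a) := by
    have := tendsto_const_nhds (x := (a : ℝ)).add (tendsto_const_div_atTop_nhds_zero_nat c)
    rw [add_zero] at this
    refine this.congr' ?_
    filter_upwards [eventually_ne_atTop 0] with p hp
    field_simp
  have := tendsto_finsetProd (range k) fun i _ => linear (b + i)
  rw [prod_const, card_range] at this
  refine this.congr fun p => ?_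
  rw [ascFactorial_eq_prod_range, prod_div_distrib, prod_const, card_range]
  push_cast
  simp only [add_assoc]

lemma fussCatalan_eq_factorial (D p : ℕ) :
    fussCatalan D p = (((D + 1) * p)! : ℝ) / ((p ! : ℝ) * ((D * p + 1)! : ℝ)) := by
  have hchoose := Nat.choose_mul_factorial_mul_factorial (n := (D + 1) * p + 1) (k := p)
    (by nlinarith)
  rw [show (D + 1) * p + 1 - p = D * p + 1 by rw [add_one_mul]; omega,
    factorial_succ ((D + 1) * p)] at hchoose
  have hchooseR : (((D + 1) * p + 1).choose p : ℝ) * p ! * (D * p + 1)! =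
      ((D + 1) * p + 1 : ℕ) * ((D + 1) * p)! := by exact_mod_cast hchoose
  rw [fussCatalan, eq_div_iff (by positivity), mul_assoc, ← mul_assoc _ (p ! : ℝ), hchooseR]
  field_simp

lemma fussCatalan_pos (D p : ℕ) : 0 < fussCatalan D p := by
  rw [fussCatalan_eq_factorial]
  positivity

lemma fussCatalan_succ_div (D p : ℕ) :
    fussCatalan D (p + 1) / fussCatalan D p =
      (((D + 1) * p + 1).ascFactorial (D + 1) : ℝ) /
        ((p + 1 : ℝ) * ((D * p + 2).ascFactorial D : ℝ)) := by
  have hnum := factorial_mul_ascFactorial ((D + 1) * p) (D + 1)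
  have hden := factorial_mul_ascFactorial (D * p + 1) D
  rw [show (D + 1) * p + (D + 1) = (D + 1) * (p + 1) by ring] at hnum
  rw [show D * p + 1 + D = D * (p + 1) + 1 by ring] at hden
  rw [fussCatalan_eq_factorial, fussCatalan_eq_factorial, ← hnum, ← hden, factorial_succ]
  push_cast
  field_simp

lemma tendsto_fussCatalan_succ_div (D : ℕ) :
    Tendsto (fun p => fussCatalan D (p + 1) / fussCatalan D p) atTop
      (𝓝 (((D : ℝ) + 1) ^ (D + 1) / (D : ℝ) ^ D)) := by
  have hnum := tendsto_ascFactorial_div_pow (D + 1) 1 (D + 1)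
  have hlin := tendsto_ascFactorial_div_pow 1 1 1
  have hden := tendsto_ascFactorial_div_pow D 2 D
  have hDD : (D : ℝ) ^ D ≠ 0 := by exact_mod_cast Nat.pow_self_pos.ne'
  have := hnum.div (hlin.mul hden) (by simp [hDD])
  push_cast at this
  rw [one_pow, one_mul] at this
  refine this.congr' ?_
  filter_upwards [eventually_ne_atTop 0] with p hp
  have hp' : (p : ℝ) ≠ 0 := by exact_mod_cast hp
  simp only [Pi.div_apply, fussCatalan_succ_div, one_mul, pow_one, ascFactorial_succ, ascFactorial_zero]
  field_simp
  push_cast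
  ring

theorem fussCatalan_radius_of_convergence_general (D : ℕ) :
    sSup {r : ℝ | 0 ≤ r ∧ Summable (fun p : ℕ => fussCatalan D p * r ^ p)} =
      (D : ℝ) ^ D / ((D : ℝ) + 1) ^ (D + 1) := by
  have hDD : (0 : ℝ) < (D : ℝ) ^ D := by exact_mod_cast Nat.pow_self_pos
  have hratio : Tendsto (fun p => ‖fussCatalan D (p + 1)‖ / ‖fussCatalan D p‖) atTop
      (𝓝 (((D : ℝ) + 1) ^ (D + 1) / (D : ℝ) ^ D)) := by
    simpa only [Real.norm_of_nonneg (fussCatalan_pos D _).le] using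
      tendsto_fussCatalan_succ_div D
  rw [sSup_summable_mul_pow_eq_inv_of_tendsto_ratio
    (Eventually.of_forall fun p => (fussCatalan_pos D p).ne') (by positivity) hratio, inv_div]

/-- The radius of convergence of `Σ_p C_p^{(D+1)} z^p`, defined as the supremum of
the `r ≥ 0` for which the series converges, equals `z_c = D^D / (D+1)^{D+1}`. -/
theorem fussCatalan_radius_of_convergence (D : ℕ) (hD : 1 ≤ D) :
    sSup {r : ℝ | 0 ≤ r ∧ Summable (fun p : ℕ => fussCatalan D p * r ^ p)} =
      (D : ℝ) ^ D / ((D : ℝ) + 1) ^ (D + 1) :=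
  fussCatalan_radius_of_convergence_general D
end

section
/- The bubble bracket [L_{(B₁,v̄₁)}, L_{(B₂,v̄₂)}] = Σ_{v∈B₁} L_{(B₁⋆_{(v,v̄₂)}B₂, v̄₁)} − Σ_{v∈B₂} L_{(B₂⋆_{(v,v̄₁)}B₁, v̄₂)}, extended bilinearly, satisfies the Jacobi identity, so the free real vector space on marked D-colored graphs equipped with this bracket is a Lie algebra. -/
/-- An abstract contraction system of marked `D`-colored graphs: `M` is the set of
marked graphs `(B, v̄)`, `Pos a` the (finite) set of positive vertices of `a`, and
`star a b v = B_a ⋆_{(v, v̄_b)} B_b` (keeping the mark of `a`) the graph contraction.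
`vertEquiv` identifies the positive vertices of a contraction with the surviving
vertices of the two pieces; `assoc` is the associativity
`(B₁⋆B₂)⋆B₃ = B₁⋆(B₂⋆B₃)` of contraction, and `comm` states that contractions at
distinct vertices of `B₁` commute. -/
structure ContractionSystem where
  M : Type
  Pos : M → Type
  [finPos : ∀ a, Fintype (Pos a)]
  star : (a : M) → M → Pos a → M
  vertEquiv : (a : M) → (b : M) → (v : Pos a) →
    Pos (star a b v) ≃ ({u : Pos a // u ≠ v} ⊕ Pos b)
  assoc : ∀ (a b c : M) (v : Pos a) (w : Pos b),
    star (star a b v) c ((vertEquiv a b v).symm (Sum.inr w)) = star a (star b c w) v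
  comm : ∀ (a b c : M) (v u : Pos a) (h : u ≠ v),
    star (star a b v) c ((vertEquiv a b v).symm (Sum.inl ⟨u, h⟩)) =
      star (star a c u) b ((vertEquiv a c u).symm (Sum.inl ⟨v, Ne.symm h⟩))

attribute [instance] ContractionSystem.finPos

/-- The bubble bracket on generators:
`[L_a, L_b] = Σ_{v∈B_a} L_{B_a⋆_{(v,v̄_b)}B_b} − Σ_{v∈B_b} L_{B_b⋆_{(v,v̄_a)}B_a}`. -/
noncomputable def ContractionSystem.brkt (S : ContractionSystem) (a b : S.M) : S.M →₀ ℝ :=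
  (∑ v : S.Pos a, Finsupp.single (S.star a b v) (1 : ℝ)) -
    (∑ v : S.Pos b, Finsupp.single (S.star b a v) (1 : ℝ))

/-- The bilinear extension of the bubble bracket to the free real vector space on
marked `D`-colored graphs. -/
noncomputable def ContractionSystem.bra (S : ContractionSystem) (x y : S.M →₀ ℝ) : S.M →₀ ℝ :=
  x.sum fun a ca => y.sum fun b cb => (ca * cb) • S.brkt a b

/-!
The bubble bracket is the commutator of the insertion product `a ◁ b = Σ_{v ∈ a} a ⋆_v b`
(`insertion a b` on generators). Expanding `(a ◁ b) ◁ c` according to where the second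
contraction takes place — at a surviving vertex of `a` or at a vertex of `b` — gives the contractions of `b` and `c` into two distinct
vertices of `a`, plus `a ◁ (b ◁ c)` by associativity of `⋆`. The first term is symmetric in `b`
and `c` because contractions at distinct vertices commute, so the associator of `◁` is symmetric
in its last two arguments. Thus `◁` is a right pre-Lie product, and the commutator of a right
pre-Lie product is a Lie bracket.
-/

theorem lie_lie_add_lie_lie_add_lie_lie {L : Type*} [LieRing L] (x y z : L) :
    ⁅⁅x, y⁆, z⁆ + ⁅⁅y, z⁆, x⁆ + ⁅⁅z, x⁆, y⁆ = 0 := by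
  rw [← lie_skew ⁅x, y⁆ z, ← lie_skew ⁅y, z⁆ x, ← lie_skew ⁅z, x⁆ y, ← neg_add, ← neg_add,
    lie_jacobi, neg_zero]

def Equiv.sigmaNeSwap (α : Type*) : (Σ v : α, {u // u ≠ v}) ≃ Σ v : α, {u // u ≠ v} where
  toFun p := ⟨p.2, p.1, p.2.2.symm⟩
  invFun p := ⟨p.2, p.1, p.2.2.symm⟩
  left_inv _ := rfl
  right_inv _ := rfl

theorem Finsupp.rightPreLie_of_single {R α : Type*} [CommSemiring R]
    (μ : (α →₀ R) →ₗ[R] (α →₀ R) →ₗ[R] α →₀ R)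
    (h : ∀ a b c : α,
      μ (μ (single a 1) (single b 1)) (single c 1) + μ (single a 1) (μ (single c 1) (single b 1)) =
        μ (μ (single a 1) (single c 1)) (single b 1) + μ (single a 1) (μ (single b 1) (single c 1)))
    (x y z : α →₀ R) :
    μ (μ x y) z + μ x (μ z y) = μ (μ x z) y + μ x (μ y z) := by
  let leftNested := μ.compr₂ μ
  let rightNested := (LinearMap.llcomp R _ _ _ ∘ₗ μ).compl₂ μ
  have key : leftNested + LinearMap.lflip.toLinearMap ∘ₗ rightNested =
      LinearMap.lflip.toLinearMap ∘ₗ leftNested + rightNested := by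
    ext a b c : 6
    simpa [leftNested, rightNested] using h a b c
  simpa [leftNested, rightNested] using congr($key x y z)

namespace ContractionSystem

open Finsupp

variable (S : ContractionSystem)

noncomputable def insertion (a b : S.M) : S.M →₀ ℝ :=
  ∑ v : S.Pos a, single (S.star a b v) 1

noncomputable def insertionProduct : (S.M →₀ ℝ) →ₗ[ℝ] (S.M →₀ ℝ) →ₗ[ℝ] S.M →₀ ℝ :=
  linearCombination ℝ fun a => linearCombination ℝ (S.insertion a)

lemma insertionProduct_single_single (a b : S.M) :
    S.insertionProduct (single a 1) (single b 1) = S.insertion a b := by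
  simp [insertionProduct]

open scoped Classical in
noncomputable def doubleInsertion (a b c : S.M) : S.M →₀ ℝ :=
  ∑ p : Σ v : S.Pos a, {u // u ≠ v},
    single (S.star (S.star a b p.1) c ((S.vertEquiv a b p.1).symm (.inl p.2))) 1

lemma doubleInsertion_comm (a b c : S.M) : S.doubleInsertion a b c = S.doubleInsertion a c b := by
  classical
  exact Fintype.sum_equiv (Equiv.sigmaNeSwap _) _ _ fun ⟨v, u, h⟩ =>
    congrArg (single · 1) (S.comm a b c v u h)

lemma sum_insertion_star (a b c : S.M) :
    ∑ v : S.Pos a, S.insertion (S.star a b v) c =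
      S.doubleInsertion a b c + ∑ w : S.Pos b, S.insertion a (S.star b c w) := by
  classical
  have split (v : S.Pos a) : S.insertion (S.star a b v) c =
      ∑ u : {u // u ≠ v}, single (S.star (S.star a b v) c ((S.vertEquiv a b v).symm (.inl u))) 1 +
        ∑ w : S.Pos b, single (S.star a (S.star b c w) v) 1 := by
    rw [insertion, ← (S.vertEquiv a b v).symm.sum_comp, Fintype.sum_sum_type]
    simp only [S.assoc]
  rw [Finset.sum_congr rfl fun v _ => split v, Finset.sum_add_distrib, doubleInsertion,
    Fintype.sum_sigma]
  simp only [insertion]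
  rw [Finset.sum_comm]

lemma insertionProduct_assoc_single (a b c : S.M) :
    S.insertionProduct (S.insertionProduct (single a 1) (single b 1)) (single c 1) =
      S.doubleInsertion a b c +
        S.insertionProduct (single a 1) (S.insertionProduct (single b 1) (single c 1)) := by
  rw [insertionProduct_single_single, insertionProduct_single_single, insertion, insertion,
    map_sum, LinearMap.sum_apply, map_sum]
  simp only [insertionProduct_single_single]
  exact S.sum_insertion_star a b c

lemma insertionProduct_rightPreLie (x y z : S.M →₀ ℝ) :
    S.insertionProduct (S.insertionProduct x y) z + S.insertionProduct x (S.insertionProduct z y) =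
      S.insertionProduct (S.insertionProduct x z) y + S.insertionProduct x (S.insertionProduct y z) :=
  Finsupp.rightPreLie_of_single _ (fun a b c => by
    rw [insertionProduct_assoc_single, insertionProduct_assoc_single, doubleInsertion_comm]
    abel) x y z

/-- A type synonym, so that the insertion product does not clash with the pointwise product of
`Finsupp`. -/
def InsertionAlgebra : Type := S.M →₀ ℝ

noncomputable instance : AddCommGroup S.InsertionAlgebra :=
  inferInstanceAs (AddCommGroup (S.M →₀ ℝ))

noncomputable instance : RightPreLieRing S.InsertionAlgebra where
  __ := (inferInstance : AddCommGroup S.InsertionAlgebra)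
  mul x y := S.insertionProduct x y
  left_distrib x := (S.insertionProduct x).map_add
  right_distrib := S.insertionProduct.map_add₂
  zero_mul := S.insertionProduct.map_zero₂
  mul_zero x := (S.insertionProduct x).map_zero
  assoc_symm' x y z := by
    simp only [associator_apply]
    exact sub_eq_sub_iff_add_eq_add.mpr (S.insertionProduct_rightPreLie x y z)

lemma bra_eq_insertionProduct_sub (x y : S.M →₀ ℝ) :
    S.bra x y = S.insertionProduct x y - S.insertionProduct y x := by
  simp only [bra, brkt, insertion, insertionProduct, linearCombination_apply, Finsupp.sum,
    LinearMap.sum_apply, LinearMap.smul_apply, Finset.smul_sum, smul_smul, smul_sub,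
    Finset.sum_sub_distrib]
  rw [Finset.sum_comm (s := y.support)]
  simp only [mul_comm]

lemma bra_eq_lie (x y : S.InsertionAlgebra) : S.bra x y = (⁅x, y⁆ : S.InsertionAlgebra) :=
  S.bra_eq_insertionProduct_sub x y

end ContractionSystem

/-- The bubble bracket is antisymmetric and satisfies the Jacobi identity, so the
free real vector space on marked `D`-colored graphs is a Lie algebra. -/
theorem bubble_bracket_lie_algebra (S : ContractionSystem) (x y z : S.M →₀ ℝ) :
    S.bra x y = -S.bra y x ∧
    S.bra (S.bra x y) z + S.bra (S.bra y z) x + S.bra (S.bra z x) y = 0 := by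
  have skew (u v : S.InsertionAlgebra) : S.bra u v = -S.bra v u := by
    rw [S.bra_eq_lie, S.bra_eq_lie]
    exact (lie_skew u v).symm
  have jacobi (u v w : S.InsertionAlgebra) :
      S.bra (S.bra u v) w + S.bra (S.bra v w) u + S.bra (S.bra w u) v = 0 := by
    simp only [S.bra_eq_lie]
    exact lie_lie_add_lie_lie_add_lie_lie u v w
  exact ⟨skew x y, jacobi x y z⟩
end

section
/- The colored boundary operator satisfies ∂_{d-1} ∘ ∂_d = 0 for all d ≥ 2, where ∂_d sends a d-bubble to the alternating sum over color positions q of all its (d-1)-bubbles omitting color i_q. -/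
open scoped Classical

/-- A closed `(D+1)`-colored graph, encoded by its total vertex set `Ω` together
with, for each color `i ∈ {0,…,D}`, the fixed-point-free involution `μ i` matching
each vertex to the other endpoint of its unique edge of color `i`. -/
structure CGraph (D : ℕ) where
  Ω : Type
  [finΩ : Fintype Ω]
  μ : Fin (D + 1) → Ω → Ω
  invol : ∀ i, Function.Involutive (μ i)
  fpf : ∀ i x, μ i x ≠ x

attribute [instance] CGraph.finΩ

variable {D : ℕ}

/-- Two vertices are equivalent for the color set `s` iff they are joined by a path
of edges with colors in `s`. -/
def CGraph.bubbleSetoid (G : CGraph D) (s : Finset (Fin (D + 1))) : Setoid G.Ω :=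
  ⟨Relation.EqvGen (fun x y => ∃ i ∈ s, G.μ i x = y), Relation.EqvGen.is_equivalence _⟩

/-- The `d`-bubbles of colors `s` (with `d = s.card`): connected components of the
subgraph with edge colors in `s`. -/
def CGraph.Bubble (G : CGraph D) (s : Finset (Fin (D + 1))) : Type :=
  Quotient (G.bubbleSetoid s)

noncomputable instance (G : CGraph D) (s : Finset (Fin (D + 1))) : Fintype (G.Bubble s) :=
  @Quotient.fintype _ _ (G.bubbleSetoid s) (fun _ _ => Classical.propDecidable _)

/-- Each bubble with colors `s' ⊆ s` is contained in a unique bubble with colors `s`. -/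
def CGraph.coarsen (G : CGraph D) {s' s : Finset (Fin (D + 1))} (h : s' ⊆ s) :
    G.Bubble s' → G.Bubble s :=
  Quotient.map' id (fun a b hab => by
    have hab' : Relation.EqvGen (fun x y => ∃ i ∈ s', G.μ i x = y) a b := hab
    show Relation.EqvGen _ a b
    refine Relation.EqvGen.mono ?_ a b hab'
    rintro x y ⟨i, hi, e⟩
    exact ⟨i, h hi, e⟩)

/-- The sign `(−1)^{q+1}` attached to removing the `q`-th color `i` of the ordered
color set `s = {i₁ < … < i_d}`. -/
def csign (s : Finset (Fin (D + 1))) (i : Fin (D + 1)) : ℤ :=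
  (-1) ^ (s.filter (· < i)).card

/-- The chain groups: formal `ℤ`-linear combinations of bubbles. -/
abbrev CGraph.Chain (G : CGraph D) : Type :=
  (Σ s : Finset (Fin (D + 1)), G.Bubble s) →₀ ℤ

/-- The colored boundary operator on a generator: a `d`-bubble is sent to the
alternating sum, over the positions `q` of its colors, of all the `(d−1)`-bubbles
(omitting the color `i_q`) contained in it. -/
noncomputable def CGraph.bnd (G : CGraph D) (a : Σ s : Finset (Fin (D + 1)), G.Bubble s) :
    G.Chain :=
  ∑ i ∈ a.1, csign a.1 i •
    ∑ c : G.Bubble (a.1.erase i),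
      if G.coarsen (Finset.erase_subset i a.1) c = a.2 then
        Finsupp.single ⟨a.1.erase i, c⟩ (1 : ℤ) else 0

/-- The linear extension of the boundary operator to chains. -/
noncomputable def CGraph.Bnd (G : CGraph D) (x : G.Chain) : G.Chain :=
  x.sum fun a n => n • G.bnd a

/-! Applying the boundary twice to a bubble with colors `s` produces, for each ordered pair
`i ≠ j` in `s`, the sum of the bubbles with colors `s \ {i, j}` inside it, with coefficient
`csign s i * csign (s.erase i) j`. The pairs `(i, j)` and `(j, i)` cancel: removing the smaller
of the two colors first shifts the position of the larger one down by one, which flips the sign. -/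

theorem Finset.sum_sum_erase_eq_zero_of_antisymm {ι M : Type*} [DecidableEq ι] [AddCommMonoid M]
    (s : Finset ι) (f : ι → ι → M) (hf : ∀ i ∈ s, ∀ j ∈ s, i ≠ j → f i j + f j i = 0) :
    ∑ i ∈ s, ∑ j ∈ s.erase i, f i j = 0 := by
  rw [← Finset.sum_finset_product' s.offDiag s s.erase fun p => by
    simp only [Finset.mem_offDiag, Finset.mem_erase]; tauto]
  refine Finset.sum_involution (fun p _ => p.swap) (fun p hp => ?_) (fun p hp _ => ?_)
    (fun p hp => by simpa [and_left_comm, ne_comm] using hp) (fun p _ => p.swap_swap)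
  · obtain ⟨hi, hj, hij⟩ := Finset.mem_offDiag.mp hp
    exact hf _ hi _ hj hij
  · exact fun h => (Finset.mem_offDiag.mp hp).2.2 (Prod.ext_iff.mp h).2

theorem csign_mul_csign_erase_of_lt {s : Finset (Fin (D + 1))} {i j : Fin (D + 1)} (hj : j ∈ s)
    (hji : j < i) : csign s i * csign (s.erase i) j = -(csign s j * csign (s.erase j) i) := by
  have hj_below : j ∈ s.filter (· < i) := by simp [hj, hji]
  have below_j : (s.erase i).filter (· < j) = s.filter (· < j) := by
    rw [Finset.filter_erase, Finset.erase_eq_of_notMem]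
    simp [hji.le.not_gt]
  have below_i : ((s.erase j).filter (· < i)).card + 1 = (s.filter (· < i)).card := by
    rw [Finset.filter_erase, Finset.card_erase_add_one hj_below]
  unfold csign
  rw [below_j, ← below_i, pow_succ]
  ring

theorem csign_mul_csign_erase_add_swap {s : Finset (Fin (D + 1))} {i j : Fin (D + 1)}
    (hi : i ∈ s) (hj : j ∈ s) (hij : i ≠ j) :
    csign s i * csign (s.erase i) j + csign s j * csign (s.erase j) i = 0 := by
  rcases hij.lt_or_gt with h | h
  · rw [csign_mul_csign_erase_of_lt hi h, add_neg_cancel]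
  · rw [csign_mul_csign_erase_of_lt hj h, neg_add_cancel]

namespace CGraph

variable (G : CGraph D)

noncomputable def subbubbleSum {s' s : Finset (Fin (D + 1))} (h : s' ⊆ s) (c : G.Bubble s) :
    G.Chain :=
  ∑ c' : G.Bubble s', if G.coarsen h c' = c then Finsupp.single ⟨s', c'⟩ 1 else 0

variable {G}

theorem subbubbleSum_congr {s₁ s₂ s : Finset (Fin (D + 1))} (e : s₁ = s₂) (h₁ : s₁ ⊆ s)
    (h₂ : s₂ ⊆ s) (c : G.Bubble s) : G.subbubbleSum h₁ c = G.subbubbleSum h₂ c := by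
  subst e; rfl

theorem coarsen_coarsen {s'' s' s : Finset (Fin (D + 1))} (h' : s'' ⊆ s') (h : s' ⊆ s)
    (x : G.Bubble s'') : G.coarsen h (G.coarsen h' x) = G.coarsen (h'.trans h) x := by
  induction x using Quotient.inductionOn'
  rfl

theorem bnd_eq_sum_subbubbleSum (s : Finset (Fin (D + 1))) (c : G.Bubble s) :
    G.bnd ⟨s, c⟩ = ∑ i ∈ s, csign s i • G.subbubbleSum (s.erase_subset i) c :=
  rfl

theorem Bnd_eq_linearCombination : G.Bnd = Finsupp.linearCombination ℤ G.bnd :=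
  funext fun x => (Finsupp.linearCombination_apply ℤ x).symm

theorem sum_ite_coarsen_subbubbleSum {s'' s' s : Finset (Fin (D + 1))} (h' : s'' ⊆ s')
    (h : s' ⊆ s) (c : G.Bubble s) :
    ∑ c' : G.Bubble s', (if G.coarsen h c' = c then G.subbubbleSum h' c' else 0) =
      G.subbubbleSum (h'.trans h) c := by
  simp only [subbubbleSum, ← coarsen_coarsen h' h, ← Finset.sum_filter]
  rw [Finset.sum_comm' (s' := fun x => {G.coarsen h' x}) fun c' x => ?_, Finset.sum_congr rfl
    fun x _ => Finset.sum_singleton _ _]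
  simp only [Finset.mem_filter, Finset.mem_univ, true_and, Finset.mem_singleton]
  constructor <;> rintro ⟨rfl, rfl⟩ <;> exact ⟨rfl, rfl⟩

theorem Bnd_subbubbleSum {s' s : Finset (Fin (D + 1))} (h : s' ⊆ s) (c : G.Bubble s) :
    G.Bnd (G.subbubbleSum h c) =
      ∑ j ∈ s', csign s' j • G.subbubbleSum ((s'.erase_subset j).trans h) c :=
  calc G.Bnd (G.subbubbleSum h c)
      = ∑ c' : G.Bubble s', if G.coarsen h c' = c then G.bnd ⟨s', c'⟩ else 0 := by
        rw [subbubbleSum, Bnd_eq_linearCombination, map_sum]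
        simp only [apply_ite, Finsupp.linearCombination_single, one_smul, map_zero]
    _ = ∑ j ∈ s', csign s' j • ∑ c' : G.Bubble s',
          if G.coarsen h c' = c then G.subbubbleSum (s'.erase_subset j) c' else 0 := by
        simp only [bnd_eq_sum_subbubbleSum, Finset.ite_sum_zero, Finset.smul_sum, smul_ite,
          smul_zero]
        exact Finset.sum_comm
    _ = _ := by simp only [sum_ite_coarsen_subbubbleSum]

theorem Bnd_bnd_eq_sum_sum (s : Finset (Fin (D + 1))) (c : G.Bubble s) :
    G.Bnd (G.bnd ⟨s, c⟩) = ∑ i ∈ s, ∑ j ∈ s.erase i, (csign s i * csign (s.erase i) j) •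
      G.subbubbleSum (((s.erase i).erase_subset j).trans (s.erase_subset i)) c := by
  rw [bnd_eq_sum_subbubbleSum, Bnd_eq_linearCombination, map_sum]
  refine Finset.sum_congr rfl fun i _ => ?_
  rw [map_zsmul, ← Bnd_eq_linearCombination, Bnd_subbubbleSum, Finset.smul_sum]
  simp only [mul_smul]

end CGraph

theorem colored_boundary_squared_zero_general (D : ℕ) (G : CGraph D)
    (s : Finset (Fin (D + 1))) (c : G.Bubble s) :
    G.Bnd (G.bnd ⟨s, c⟩) = 0 := by
  rw [G.Bnd_bnd_eq_sum_sum]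
  refine Finset.sum_sum_erase_eq_zero_of_antisymm s _ fun i hi j hj hij => ?_
  rw [CGraph.subbubbleSum_congr (Finset.erase_right_comm (a := i) (b := j)) _
    (((s.erase j).erase_subset i).trans (s.erase_subset j)), ← add_smul,
    csign_mul_csign_erase_add_swap hi hj hij, zero_smul]

/-- `∂_{d−1} ∘ ∂_d = 0` for all `d ≥ 2`: the colored boundary operators define
a homology. -/
theorem colored_boundary_squared_zero (D : ℕ) (G : CGraph D)
    (s : Finset (Fin (D + 1))) (c : G.Bubble s) (hd : 2 ≤ s.card) :
    G.Bnd (G.bnd ⟨s, c⟩) = 0 :=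
  colored_boundary_squared_zero_general D G s c
end

section
/- Let f: [0,1] → ℝ be continuous with f(0) = f(1) = 0 and f(t) ≥ 0. Define m_f(s,t) = inf of f on the interval between s and t, and d_f(s,t) = f(s) + f(t) − 2m_f(s,t). Then d_f is a pseudometric on [0,1]: it is nonnegative, symmetric, vanishes on the diagonal, and satisfies the triangle inequality. -/
/-!
Every point of `uIcc s u` lies in `uIcc s t` or in `uIcc t u`, so
`min (m_f(s,t)) (m_f(t,u)) ≤ m_f(s,u)`; both minima are at most `f t`, hence
`m_f(s,t) + m_f(t,u) ≤ f t + m_f(s,u)`, which is the triangle inequality for `d_f`.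
Continuity bounds `f` below on each interval, which is needed because `sInf` of a set of
reals that is not bounded below is `0`.
-/

open Set

/-- `m_f(s,t)`: the infimum of `f` on the closed interval between `s` and `t`. -/
noncomputable def excursionMin (f : ℝ → ℝ) (s t : ℝ) : ℝ := sInf (f '' Set.uIcc s t)

/-- The excursion pseudo-distance `d_f(s,t) = f(s) + f(t) − 2 m_f(s,t)`. -/
noncomputable def excursionDist (f : ℝ → ℝ) (s t : ℝ) : ℝ :=
  f s + f t - 2 * excursionMin f s t

section

variable {f : ℝ → ℝ} {s t u : ℝ}

lemma excursionMin_le (hb : BddBelow (f '' uIcc s t)) {x : ℝ} (hx : x ∈ uIcc s t) :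
    excursionMin f s t ≤ f x :=
  csInf_le hb ⟨x, hx, rfl⟩

lemma excursionMin_comm (f : ℝ → ℝ) (s t : ℝ) : excursionMin f s t = excursionMin f t s := by
  rw [excursionMin, excursionMin, uIcc_comm]

lemma excursionMin_self (f : ℝ → ℝ) (s : ℝ) : excursionMin f s s = f s := by
  rw [excursionMin, uIcc_self, image_singleton, csInf_singleton]

lemma min_excursionMin_le (hst : BddBelow (f '' uIcc s t)) (htu : BddBelow (f '' uIcc t u)) :
    min (excursionMin f s t) (excursionMin f t u) ≤ excursionMin f s u := by
  refine le_csInf (nonempty_uIcc.image f) ?_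
  rintro _ ⟨x, hx, rfl⟩
  rcases uIcc_subset_uIcc_union_uIcc hx with hx | hx
  · exact (min_le_left _ _).trans (excursionMin_le hst hx)
  · exact (min_le_right _ _).trans (excursionMin_le htu hx)

lemma excursionDist_nonneg (hb : BddBelow (f '' uIcc s t)) : 0 ≤ excursionDist f s t := by
  have hs := excursionMin_le hb left_mem_uIcc
  have ht := excursionMin_le hb right_mem_uIcc
  rw [excursionDist]
  linarith

lemma excursionDist_comm (f : ℝ → ℝ) (s t : ℝ) : excursionDist f s t = excursionDist f t s := by
  rw [excursionDist, excursionDist, excursionMin_comm, add_comm (f s)]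

lemma excursionDist_self (f : ℝ → ℝ) (s : ℝ) : excursionDist f s s = 0 := by
  rw [excursionDist, excursionMin_self]
  ring

lemma excursionDist_triangle (hst : BddBelow (f '' uIcc s t))
    (htu : BddBelow (f '' uIcc t u)) :
    excursionDist f s u ≤ excursionDist f s t + excursionDist f t u := by
  have hmin := min_excursionMin_le hst htu
  have hst_le := excursionMin_le hst right_mem_uIcc
  have htu_le := excursionMin_le htu left_mem_uIcc
  rw [excursionDist, excursionDist, excursionDist]
  rcases min_choice (excursionMin f s t) (excursionMin f t u) with h | h <;>
    rw [h] at hmin <;> linarith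

end

lemma bddBelow_image_uIcc_of_continuousOn {f : ℝ → ℝ} {a b s t : ℝ}
    (hf : ContinuousOn f (Icc a b)) (hs : s ∈ Icc a b) (ht : t ∈ Icc a b) :
    BddBelow (f '' uIcc s t) :=
  (isCompact_uIcc.image_of_continuousOn (hf.mono (uIcc_subset_Icc hs ht))).bddBelow

theorem excursionDist_pseudometric_general (f : ℝ → ℝ)
    (hf : ContinuousOn f (Icc 0 1)) :
    (∀ s ∈ Icc (0 : ℝ) 1, ∀ t ∈ Icc (0 : ℝ) 1, 0 ≤ excursionDist f s t) ∧
    (∀ s ∈ Icc (0 : ℝ) 1, ∀ t ∈ Icc (0 : ℝ) 1, excursionDist f s t = excursionDist f t s) ∧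
    (∀ s ∈ Icc (0 : ℝ) 1, excursionDist f s s = 0) ∧
    (∀ s ∈ Icc (0 : ℝ) 1, ∀ t ∈ Icc (0 : ℝ) 1, ∀ u ∈ Icc (0 : ℝ) 1,
      excursionDist f s u ≤ excursionDist f s t + excursionDist f t u) :=
  ⟨fun _ hs _ ht => excursionDist_nonneg (bddBelow_image_uIcc_of_continuousOn hf hs ht),
    fun s _ t _ => excursionDist_comm f s t,
    fun s _ => excursionDist_self f s,
    fun _ hs _ ht _ hu => excursionDist_triangle (bddBelow_image_uIcc_of_continuousOn hf hs ht)
      (bddBelow_image_uIcc_of_continuousOn hf ht hu)⟩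

/-- For a continuous nonnegative excursion `f` on `[0,1]` with `f(0) = f(1) = 0`,
`d_f` is a pseudometric on `[0,1]`: nonnegative, symmetric, vanishing on the
diagonal, and satisfying the triangle inequality. -/
theorem excursionDist_pseudometric (f : ℝ → ℝ)
    (hf : ContinuousOn f (Icc 0 1)) (h0 : f 0 = 0) (h1 : f 1 = 0)
    (hpos : ∀ t ∈ Icc (0 : ℝ) 1, 0 ≤ f t) :
    (∀ s ∈ Icc (0 : ℝ) 1, ∀ t ∈ Icc (0 : ℝ) 1, 0 ≤ excursionDist f s t) ∧
    (∀ s ∈ Icc (0 : ℝ) 1, ∀ t ∈ Icc (0 : ℝ) 1, excursionDist f s t = excursionDist f t s) ∧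
    (∀ s ∈ Icc (0 : ℝ) 1, excursionDist f s s = 0) ∧
    (∀ s ∈ Icc (0 : ℝ) 1, ∀ t ∈ Icc (0 : ℝ) 1, ∀ u ∈ Icc (0 : ℝ) 1,
      excursionDist f s u ≤ excursionDist f s t + excursionDist f t u) :=
  excursionDist_pseudometric_general f hf
end
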